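/- Let ε_1,…,ε_n be i.i.d. random variables uniform on {−1,1}. Then E exp( (Σ_{i=1}^n ε_i)² / (4n) ) ≤ 2. -/

import Mathlib

/-!
Linearize the square with the Gaussian integral
`exp (s ^ 2 / (4 * a)) = √(a / π) * ∫ x, exp (-a * x ^ 2 + s * x)`.
After exchanging the integrals, the inner expectation is `exp (-a * x ^ 2)` times the moment
generating function of the sum at `x`. For a sum `S` of `n` Rademacher signs the latter is
`cosh x ^ n ≤ exp (n * x ^ 2 / 2)`, so `S` is sub-Gaussian with variance proxy `n`. The remaining
Gaussian integral gives `E exp (S ^ 2 / (4 * a)) ≤ √(2 * a / (2 * a - n))`, which is `√2` for `a = n`.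
-/

open MeasureTheory Finset Real

noncomputable section

/-- Rademacher sign associated to a Boolean. -/
def sgn (b : Bool) : ℝ := if b then 1 else -1

/-- Uniform measure on `n` independent Rademacher signs. -/
def signMeasure (n : ℕ) : Measure (Fin n → Bool) :=
  (PMF.uniformOfFintype (Fin n → Bool)).toMeasure

end

open ProbabilityTheory
open scoped NNReal

lemma exp_sq_div_eq_integral {a : ℝ} (ha : 0 < a) (s : ℝ) :
    exp (s ^ 2 / (4 * a)) = √(a / π) * ∫ x : ℝ, exp (-a * x ^ 2 + s * x) := by
  have h : ∀ x : ℝ, -a * x ^ 2 + s * x = -a * (x - s / (2 * a)) ^ 2 + s ^ 2 / (4 * a) := by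
    intro x; field_simp; ring
  simp_rw [h, exp_add, integral_mul_const]
  rw [integral_sub_right_eq_self (fun x ↦ exp (-a * x ^ 2)) (s / (2 * a)), integral_gaussian,
    ← mul_assoc, ← sqrt_mul (by positivity), div_mul_div_cancel₀ pi_ne_zero, div_self ha.ne',
    sqrt_one, one_mul]

namespace ProbabilityTheory.HasSubgaussianMGF

variable {Ω : Type*} [MeasurableSpace Ω] {μ : Measure Ω} {X : Ω → ℝ} {c : ℝ≥0}

lemma isFiniteMeasure (h : HasSubgaussianMGF X c μ) : IsFiniteMeasure μ := by
  simpa [integrable_const_iff_isFiniteMeasure] using h.integrable_exp_mul 0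

lemma integral_exp_neg_mul_sq_add_mul_le (h : HasSubgaussianMGF X c μ) (a x : ℝ) :
    ∫ ω, exp (-a * x ^ 2 + X ω * x) ∂μ ≤ exp (-(a - c / 2) * x ^ 2) := by
  calc ∫ ω, exp (-a * x ^ 2 + X ω * x) ∂μ = exp (-a * x ^ 2) * mgf X μ x := by
        simp_rw [exp_add, integral_const_mul, mgf, mul_comm (X _) x]
    _ ≤ exp (-a * x ^ 2) * exp (c * x ^ 2 / 2) := by gcongr; exact h.mgf_le x
    _ = exp (-(a - c / 2) * x ^ 2) := by rw [← exp_add]; ring_nf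

lemma integrable_exp_neg_mul_sq_add_mul_prod (h : HasSubgaussianMGF X c μ) {a : ℝ}
    (ha : c < 2 * a) :
    Integrable (fun p : Ω × ℝ ↦ exp (-a * p.2 ^ 2 + X p.1 * p.2)) (μ.prod volume) := by
  have := h.isFiniteMeasure
  have hmeas : AEStronglyMeasurable (fun p : Ω × ℝ ↦ exp (-a * p.2 ^ 2 + X p.1 * p.2))
      (μ.prod volume) := by
    have hX := h.aemeasurable.comp_fst (ν := (volume : Measure ℝ))
    exact ((((measurable_snd.pow_const 2).const_mul (-a)).aemeasurable.add
      (hX.mul measurable_snd.aemeasurable)).exp).aestronglyMeasurable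
  refine (integrable_prod_iff' hmeas).2 ⟨ae_of_all _ fun x ↦ ?_, ?_⟩
  · simp_rw [exp_add, mul_comm (X _) x]
    exact (h.integrable_exp_mul x).const_mul _
  · have hpos : 0 < a - c / 2 := by linarith
    refine (integrable_exp_neg_mul_sq hpos).mono' ?_ (ae_of_all _ fun x ↦ ?_)
    · exact hmeas.norm.prod_swap.integral_prod_right'
    · simp_rw [norm_of_nonneg (exp_pos _).le,
        norm_of_nonneg (integral_nonneg fun _ ↦ (exp_pos _).le)]
      exact h.integral_exp_neg_mul_sq_add_mul_le a x

theorem integral_exp_sq_div_le (h : HasSubgaussianMGF X c μ) {a : ℝ} (ha : c < 2 * a) :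
    ∫ ω, exp (X ω ^ 2 / (4 * a)) ∂μ ≤ √(2 * a / (2 * a - c)) := by
  have := h.isFiniteMeasure
  have hc : (0 : ℝ) ≤ c := c.2
  have ha₀ : 0 < a := by linarith
  have hF := h.integrable_exp_neg_mul_sq_add_mul_prod ha
  calc ∫ ω, exp (X ω ^ 2 / (4 * a)) ∂μ
      = √(a / π) * ∫ x, ∫ ω, exp (-a * x ^ 2 + X ω * x) ∂μ := by
        simp_rw [exp_sq_div_eq_integral ha₀, integral_const_mul]
        rw [integral_integral_swap hF]
    _ ≤ √(a / π) * ∫ x, exp (-(a - c / 2) * x ^ 2) := by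
        gcongr
        · exact hF.integral_prod_right
        · exact integrable_exp_neg_mul_sq (by linarith)
        · exact h.integral_exp_neg_mul_sq_add_mul_le a
    _ = √(2 * a / (2 * a - c)) := by
        rw [integral_gaussian, ← sqrt_mul (by positivity)]
        congr 1
        field_simp

end ProbabilityTheory.HasSubgaussianMGF

lemma sum_exp_mul_sgn (t : ℝ) : ∑ x : Bool, exp (t * sgn x) = 2 * cosh t := by
  rw [Fintype.sum_bool, cosh_eq]
  simp only [sgn, if_true, Bool.false_eq_true, if_false, mul_one, mul_neg]
  ring

lemma sum_exp_mul_sum_sgn (n : ℕ) (t : ℝ) :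
    ∑ b : Fin n → Bool, exp (t * ∑ i, sgn (b i)) = (2 * cosh t) ^ n := by
  simp_rw [← sum_exp_mul_sgn, Fintype.sum_pow, mul_sum, exp_sum]

instance isProbabilityMeasure_signMeasure (n : ℕ) : IsProbabilityMeasure (signMeasure n) :=
  PMF.toMeasure.isProbabilityMeasure _

lemma integral_signMeasure (n : ℕ) (f : (Fin n → Bool) → ℝ) :
    ∫ b, f b ∂signMeasure n = (∑ b, f b) / 2 ^ n := by
  simp [signMeasure, PMF.integral_eq_sum, PMF.uniformOfFintype_apply,
    ← mul_sum, div_eq_inv_mul]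

lemma mgf_sum_sgn (n : ℕ) (t : ℝ) :
    mgf (fun b : Fin n → Bool ↦ ∑ i, sgn (b i)) (signMeasure n) t = cosh t ^ n := by
  rw [mgf, integral_signMeasure, sum_exp_mul_sum_sgn, mul_pow,
    mul_div_cancel_left₀ _ (by positivity)]

lemma hasSubgaussianMGF_sum_sgn (n : ℕ) :
    HasSubgaussianMGF (fun b : Fin n → Bool ↦ ∑ i, sgn (b i)) n (signMeasure n) where
  integrable_exp_mul _ := .of_finite
  mgf_le t := by
    rw [mgf_sum_sgn, NNReal.coe_natCast, mul_div_assoc, exp_nat_mul]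
    exact pow_le_pow_left₀ (cosh_pos t).le (cosh_le_exp_half_sq t) n

/-- `E exp((Σ εᵢ)²/(4n)) ≤ 2` for i.i.d. Rademacher signs. -/
theorem exp_sq_sum_rademacher_le_two (n : ℕ) :
    (∫ b : Fin n → Bool, Real.exp ((∑ i, sgn (b i)) ^ 2 / (4 * n))
      ∂(signMeasure n)) ≤ 2 := by
  rcases n.eq_zero_or_pos with rfl | hn
  · simp -- the exponent is `0 / 0 = 0`
  calc _ ≤ √(2 * n / (2 * n - n)) :=
        (hasSubgaussianMGF_sum_sgn n).integral_exp_sq_div_le (by norm_cast; omega)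
    _ = √2 := by congr 1; field_simp; ring
    _ ≤ 2 := by rw [sqrt_le_left (by norm_num)]; norm_num
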